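/- arXiv:2311.03601 — 7 statements merged into one kernel-verified Lean document; each statement's English description precedes it below -/
import Mathlib

section
/- Let Y be a symmetric n×n integer matrix with all diagonal entries equal to zero and R any symmetric n×n integer matrix. Then det(R + 2Y) ≡ det(R) (mod 4). -/
open Matrix Finset

lemma aux_prod {ι : Type*} [DecidableEq ι] (f g : ι → ℤ) (hg : ∀ i, 2 ∣ g i) (s : Finset ι) :
    (4:ℤ) ∣ (∏ i ∈ s, (f i + g i)) -
      ((∏ i ∈ s, f i) + ∑ i ∈ s, g i * ∏ j ∈ s.erase i, f j) := by
  classical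
  induction s using Finset.induction_on with
  | empty => simp
  | @insert a s ha ih =>
    rw [Finset.prod_insert ha, Finset.prod_insert ha, Finset.sum_insert ha,
      Finset.erase_insert ha]
    have hsum : ∑ i ∈ s, g i * ∏ j ∈ (insert a s).erase i, f j
        = f a * ∑ i ∈ s, g i * ∏ j ∈ s.erase i, f j := by
      rw [Finset.mul_sum]
      refine Finset.sum_congr rfl fun i hi => ?_
      rw [Finset.erase_insert_of_ne (by rintro rfl; exact ha hi),
        Finset.prod_insert (fun h => ha (Finset.mem_of_mem_erase h))]
      ring
    rw [hsum]
    have key : (f a + g a) * (∏ i ∈ s, (f i + g i)) -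
        ((f a * ∏ i ∈ s, f i) + (g a * ∏ i ∈ s, f i
          + f a * ∑ i ∈ s, g i * ∏ j ∈ s.erase i, f j))
      = (f a + g a) * ((∏ i ∈ s, (f i + g i)) -
          ((∏ i ∈ s, f i) + ∑ i ∈ s, g i * ∏ j ∈ s.erase i, f j))
        + g a * (∑ i ∈ s, g i * ∏ j ∈ s.erase i, f j) := by ring
    rw [key]
    refine dvd_add (ih.mul_left _) ?_
    have h2 : (2:ℤ) ∣ ∑ i ∈ s, g i * ∏ j ∈ s.erase i, f j :=
      Finset.dvd_sum fun i _ => (hg i).mul_right _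
    have h4 : (4:ℤ) = 2 * 2 := by norm_num
    rw [h4]
    exact mul_dvd_mul (hg a) h2

lemma even_double_sum {n : ℕ} (g : Fin n → Fin n → ℤ)
    (hsymm : ∀ i j, g i j = g j i) (hdiag : ∀ i, g i i = 0) :
    (2:ℤ) ∣ ∑ i, ∑ j, g i j := by
  have h0 : ((∑ i, ∑ j, g i j : ℤ) : ZMod 2) = 0 := by
    push_cast
    rw [← Finset.sum_product']
    refine Finset.sum_ninvolution (fun p => (p.2, p.1)) ?_ ?_ (fun _ => Finset.mem_univ _)
      (fun p => rfl)
    · intro p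
      have h : g p.2 p.1 = g p.1 p.2 := hsymm _ _
      rw [h]
      exact CharTwo.add_self_eq_zero _
    · intro p hp h
      have h1 : p.2 = p.1 := congrArg Prod.fst h
      apply hp
      have h2 : g p.1 p.2 = 0 := by rw [h1, hdiag]
      rw [h2]
      simp
  exact (ZMod.intCast_zmod_eq_zero_iff_dvd _ 2).mp h0

theorem stmt_2 {n : ℕ} (Y R : Matrix (Fin n) (Fin n) ℤ)
    (hY : Yᵀ = Y) (hdiag : ∀ i, Y i i = 0) (hR : Rᵀ = R) :
    (R + 2 • Y).det ≡ R.det [ZMOD 4] := by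
  classical
  set S : ℤ := ∑ σ : Equiv.Perm (Fin n), (Equiv.Perm.sign σ : ℤ) *
      ∑ i, (2 * Y (σ i) i) * ∏ j ∈ Finset.univ.erase i, R (σ j) j with hS
  have hentry : ∀ (σ : Equiv.Perm (Fin n)) i,
      (R + 2 • Y) (σ i) i = R (σ i) i + 2 * Y (σ i) i := by
    intro σ i
    rw [Matrix.add_apply, Matrix.smul_apply]
    norm_num
  have h1 : (4:ℤ) ∣ (R + 2 • Y).det - (R.det + S) := by
    rw [Matrix.det_apply', Matrix.det_apply', hS]
    simp only [Int.cast_id]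
    rw [← Finset.sum_add_distrib, ← Finset.sum_sub_distrib]
    refine Finset.dvd_sum fun σ _ => ?_
    have hp : ∏ i, (R + 2 • Y) (σ i) i = ∏ i, (R (σ i) i + 2 * Y (σ i) i) :=
      Finset.prod_congr rfl fun i _ => hentry σ i
    rw [hp]
    have key : (Equiv.Perm.sign σ : ℤ) * (∏ i, (R (σ i) i + 2 * Y (σ i) i)) -
        ((Equiv.Perm.sign σ : ℤ) * ∏ i, R (σ i) i + (Equiv.Perm.sign σ : ℤ) *
          ∑ i, (2 * Y (σ i) i) * ∏ j ∈ Finset.univ.erase i, R (σ j) j)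
      = (Equiv.Perm.sign σ : ℤ) * ((∏ i, (R (σ i) i + 2 * Y (σ i) i)) -
        ((∏ i, R (σ i) i) + ∑ i, (2 * Y (σ i) i) * ∏ j ∈ Finset.univ.erase i, R (σ j) j)) := by
      ring
    rw [key]
    exact (aux_prod _ _ (fun i => ⟨Y (σ i) i, rfl⟩) _).mul_left _
  have hdet : ∀ i, (R.updateCol i (fun k => Y k i)).det = ∑ j, adjugate R i j * Y j i := by
    intro i
    rw [← Matrix.cramer_apply, Matrix.cramer_eq_adjugate_mulVec]
    rfl
  have h2 : S = 2 * ∑ i, ∑ j, adjugate R i j * Y j i := by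
    rw [hS]
    have step1 : ∀ σ : Equiv.Perm (Fin n), (Equiv.Perm.sign σ : ℤ) *
        ∑ i, (2 * Y (σ i) i) * ∏ j ∈ Finset.univ.erase i, R (σ j) j
        = ∑ i, 2 * ((Equiv.Perm.sign σ : ℤ) *
            (Y (σ i) i * ∏ j ∈ Finset.univ.erase i, R (σ j) j)) := by
      intro σ
      rw [Finset.mul_sum]
      exact Finset.sum_congr rfl fun i _ => by ring
    rw [Finset.sum_congr rfl fun σ _ => step1 σ, Finset.sum_comm]
    have step2 : ∀ i : Fin n,
        ∑ σ : Equiv.Perm (Fin n), 2 * ((Equiv.Perm.sign σ : ℤ) *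
            (Y (σ i) i * ∏ j ∈ Finset.univ.erase i, R (σ j) j))
        = 2 * ∑ j, adjugate R i j * Y j i := by
      intro i
      rw [← hdet i, Matrix.det_apply']
      simp only [Int.cast_id]
      rw [Finset.mul_sum]
      refine Finset.sum_congr rfl fun σ _ => ?_
      have hprod : ∏ j, (R.updateCol i (fun k => Y k i)) (σ j) j
          = Y (σ i) i * ∏ j ∈ Finset.univ.erase i, R (σ j) j := by
        rw [← Finset.mul_prod_erase Finset.univ _ (Finset.mem_univ i)]
        congr 1
        · simp [Matrix.updateCol_apply]
        · refine Finset.prod_congr rfl fun j hj => ?_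
          rw [Matrix.updateCol_apply, if_neg (Finset.ne_of_mem_erase hj)]
      rw [hprod]
    rw [Finset.sum_congr rfl fun i _ => step2 i, ← Finset.mul_sum]
  have hAsymm : ∀ i j, adjugate R i j = adjugate R j i := by
    intro i j
    have h := Matrix.adjugate_transpose R
    rw [hR] at h
    calc adjugate R i j = (adjugate R)ᵀ j i := rfl
      _ = adjugate R j i := by rw [h]
  have h3 : (4:ℤ) ∣ S := by
    rw [h2]
    have heven : (2:ℤ) ∣ ∑ i, ∑ j, adjugate R i j * Y j i := by
      refine even_double_sum _ ?_ ?_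
      · intro i j
        have hYs : Y j i = Y i j := by rw [← Matrix.transpose_apply Y i j, hY]
        rw [hAsymm i j, hYs]
      · intro i; rw [hdiag]; ring
    obtain ⟨c, hc⟩ := heven
    exact ⟨c, by rw [hc]; ring⟩
  have hfinal : (4:ℤ) ∣ (R + 2 • Y).det - R.det := by
    have h' : (R + 2 • Y).det - (R.det + S) + S = (R + 2 • Y).det - R.det := by ring
    rw [← h']
    exact dvd_add h1 h3
  exact (Int.modEq_iff_dvd.mpr hfinal).symm
end

section
/- For any symmetric n×n integer matrix R and indices i ≠ j, det(R + 2(ε_{ij} + ε_{ji})) ≡ det(R) (mod 4), where ε_{ij} is the elementary matrix with a 1 in position (i,j) and zeros elsewhere. -/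
/-!
Adding `c (ε_{ij} + ε_{ji})` changes only the columns `i` and `j`, by `c e_j` and `c e_i`.
Expanding the determinant bilinearly in these two columns gives
`det M + c (adj M)_{ij} + c (adj M)_{ji} + c² d` for an integer `d`. For symmetric `M` the
adjugate is symmetric, so with `c = 2` the correction is `4 ((adj M)_{ij} + d)`.
-/

open Matrix

namespace Matrix

theorem updateCol_updateCol_col_of_ne {m n α : Type*} [DecidableEq n] (M : Matrix m n α)
    {i j : n} (hij : i ≠ j) (v : m → α) :
    (M.updateCol i v).updateCol j (fun k => M k j) = M.updateCol i v := by
  ext a b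
  rcases eq_or_ne b j with rfl | hbj
  · simp [updateCol_ne hij.symm]
  · rw [updateCol_ne hbj]

theorem add_smul_single_add_single_eq_updateCol {n R : Type*} [DecidableEq n] [Semiring R]
    (M : Matrix n n R) {i j : n} (hij : i ≠ j) (c : R) :
    M + c • (single i j 1 + single j i 1) =
      (M.updateCol i ((fun k => M k i) + c • Pi.single j 1)).updateCol j
        ((fun k => M k j) + c • Pi.single i 1) := by
  ext a b
  rcases eq_or_ne b j with rfl | hbj
  · simp [single_apply, Pi.single_apply, hij, eq_comm]
  rcases eq_or_ne b i with rfl | hbi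
  · simp [single_apply, Pi.single_apply, hbj, hbj.symm, eq_comm]
  · simp [hbj, hbi, hbj.symm, hbi.symm]

variable {n R : Type*} [Fintype n] [DecidableEq n] [CommRing R]

theorem det_updateCol_single_one (M : Matrix n n R) (i j : n) :
    (M.updateCol i (Pi.single j 1)).det = M.adjugate i j := by
  rw [← cramer_apply, cramer_eq_adjugate_mulVec, mulVec_single_one, col_apply]

theorem det_updateCol_add_updateCol_add (M : Matrix n n R) {i j : n} (hij : i ≠ j)
    (x y : n → R) :
    ((M.updateCol i ((fun k => M k i) + x)).updateCol j ((fun k => M k j) + y)).det =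
      M.det + (M.updateCol i x).det + (M.updateCol j y).det +
        ((M.updateCol i x).updateCol j y).det := by
  have hA : (M.updateCol i ((fun k => M k i) + x)).det = M.det + (M.updateCol i x).det := by
    rw [det_updateCol_add, updateCol_eq_self]
  have hAy : ((M.updateCol i ((fun k => M k i) + x)).updateCol j y).det =
      (M.updateCol j y).det + ((M.updateCol i x).updateCol j y).det := by
    rw [updateCol_comm _ hij, det_updateCol_add, updateCol_updateCol_col_of_ne _ hij.symm,
      updateCol_comm _ hij]
  rw [det_updateCol_add, updateCol_updateCol_col_of_ne _ hij, hA, hAy]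
  ring

theorem det_add_smul_single_add_single (M : Matrix n n R) {i j : n} (hij : i ≠ j) (c : R) :
    (M + c • (single i j 1 + single j i 1)).det =
      M.det + c * (M.adjugate i j + M.adjugate j i) +
        c ^ 2 * ((M.updateCol i (Pi.single j 1)).updateCol j (Pi.single i 1)).det := by
  rw [add_smul_single_add_single_eq_updateCol M hij, det_updateCol_add_updateCol_add M hij,
    det_updateCol_smul, det_updateCol_smul, det_updateCol_smul, updateCol_comm _ hij,
    det_updateCol_smul, updateCol_comm _ hij.symm, det_updateCol_single_one,
    det_updateCol_single_one]
  ring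

end Matrix

theorem stmt_3 {n : ℕ} (R : Matrix (Fin n) (Fin n) ℤ) (hR : Rᵀ = R)
    (i j : Fin n) (hij : i ≠ j) :
    (R + 2 • (Matrix.single i j (1 : ℤ) + Matrix.single j i 1)).det
      ≡ R.det [ZMOD 4] := by
  have hadj : R.adjugate j i = R.adjugate i j := (IsSymm.adjugate hR).apply i j
  rw [← Nat.cast_smul_eq_nsmul ℤ, det_add_smul_single_add_single R hij, hadj]
  generalize ((R.updateCol i _).updateCol j _).det = d
  convert Int.modEq_add_fac_self (a := R.det) (n := 4) (t := R.adjugate i j + d) using 1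
  ring
end

section
/- Let B be a skew-symmetric n×n integer matrix, k ∈ [n], M_k its replicating matrix at k, and 𝔖(A) = V(A) + V(A)ᵀ. Then every diagonal entry of M_k·𝔖(B)·M_kᵀ − 𝔖(μ_k(B)) is divisible by 4. -/
open Matrix

def upperV {n : ℕ} (B : Matrix (Fin n) (Fin n) ℤ) : Matrix (Fin n) (Fin n) ℤ :=
  Matrix.of fun i j => if i < j then B i j else if i = j then 1 else 0

def symS {n : ℕ} (B : Matrix (Fin n) (Fin n) ℤ) : Matrix (Fin n) (Fin n) ℤ :=
  upperV B + (upperV B)ᵀ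

def repM {n : ℕ} (B : Matrix (Fin n) (Fin n) ℤ) (k : Fin n) : Matrix (Fin n) (Fin n) ℤ :=
  (Matrix.of fun i j => if i = j then (if i = k then (-1 : ℤ) else 1) else 0) +
  (Matrix.of fun i j => if j = k then max 0 (-(B i k)) else 0)

def mutB {n : ℕ} (B : Matrix (Fin n) (Fin n) ℤ) (k : Fin n) : Matrix (Fin n) (Fin n) ℤ :=
  repM B k * B * (repM B k)ᵀ

lemma rowM {n : ℕ} (B : Matrix (Fin n) (Fin n) ℤ) (k i : Fin n) (f : Fin n → ℤ) :
    ∑ a, repM B k i a * f a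
      = (if i = k then (-1:ℤ) else 1) * f i + max 0 (-(B i k)) * f k := by
  simp [repM, add_mul, Finset.sum_add_distrib, ite_mul, Finset.sum_ite_eq, Finset.sum_ite_eq']

lemma rowM' {n : ℕ} (B : Matrix (Fin n) (Fin n) ℤ) (k i : Fin n) (f : Fin n → ℤ) :
    ∑ a, f a * repM B k i a
      = f i * (if i = k then (-1:ℤ) else 1) + f k * max 0 (-(B i k)) := by
  have := rowM B k i f
  calc ∑ a, f a * repM B k i a = ∑ a, repM B k i a * f a := by
        simp [mul_comm]
    _ = _ := by rw [rowM]; ring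

lemma symS_diag {n : ℕ} (X : Matrix (Fin n) (Fin n) ℤ) (i : Fin n) : symS X i i = 2 := by
  simp [symS, upperV, Matrix.add_apply]

theorem stmt_12 {n : ℕ} (B : Matrix (Fin n) (Fin n) ℤ) (hB : Bᵀ = -B) (k : Fin n) (i : Fin n) :
    4 ∣ (repM B k * symS B * (repM B k)ᵀ - symS (mutB B k)) i i := by
  have hskew : ∀ a b : Fin n, B b a = - B a b := by
    intro a b; have := congrFun (congrFun hB a) b; simpa [Matrix.transpose_apply] using this
  have hBkk : B k k = 0 := by have := hskew k k; omega
  have entry : (repM B k * symS B * (repM B k)ᵀ) i i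
      = ∑ b, (∑ a, repM B k i a * symS B a b) * repM B k i b := by
    simp [Matrix.mul_apply, Matrix.transpose_apply]
  rw [Matrix.sub_apply, entry]
  simp only [rowM]
  rw [rowM']
  rw [symS_diag, symS_diag, symS_diag]
  set c := max 0 (-(B i k)) with hc
  rcases eq_or_ne i k with rfl | hik
  · simp [hBkk, hc]
  · rw [if_neg hik]
    have hS : symS B i k = (if i < k then B i k else - B i k) ∧
        symS B k i = (if i < k then B i k else - B i k) := by
      constructor <;>
      · simp only [symS, Matrix.add_apply, Matrix.transpose_apply, upperV, Matrix.of_apply]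
        have hki : B k i = -B i k := hskew i k
        rcases lt_or_gt_of_ne hik with h | h
        · simp [h, h.ne, h.ne', not_lt.mpr h.le, hki]
        · simp [h, h.ne, h.ne', not_lt.mpr h.le, hki]
    obtain ⟨h1, h2⟩ := hS
    rw [h1, h2]
    rcases le_or_gt 0 (B i k) with hb | hb
    · have : c = 0 := by simp [hc]; omega
      rw [this]; ring_nf; exact ⟨0, by ring⟩
    · have : c = -(B i k) := by simp [hc]; omega
      rw [this]
      rcases lt_or_gt_of_ne hik with h | h
      · rw [if_pos h]; exact ⟨0, by ring⟩
      · rw [if_neg (not_lt.mpr h.le)]; exact ⟨B i k * B i k, by ring⟩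
end

section
/- Let B be a skew-symmetric n×n integer matrix and let P be the permutation matrix of the simple transposition s_k = (k, k+1). Then P·𝔖(B)·Pᵀ − 𝔖(P·B·Pᵀ) = 2·B_{k,k+1}·(ε_{k,k+1} + ε_{k+1,k}). -/
open Matrix

/-
Conjugating by `P` relabels entries: `(P A Pᵀ) i j = A (σ i) (σ j)`. Off the diagonal, `𝔖(B) i j`
is `B i j` or `-B i j` according as `i < j` or `j < i` (as `B` is skew), so `P 𝔖(B) Pᵀ` and
`𝔖(P B Pᵀ)` agree at `(i, j)` unless `σ` reverses the order of `i` and `j`. Since `k + 1` covers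
`k`, the swap reverses only the pair `{k, k + 1}`, where the difference is `2 B k (k + 1)`.
-/

theorem Matrix.of_perm_mul_mul_transpose {m R : Type*} [Fintype m] [DecidableEq m]
    [NonAssocSemiring R] (σ : Equiv.Perm m) (A : Matrix m m R) :
    (of fun i j => if σ i = j then (1 : R) else 0) * A *
      (of fun i j => if σ i = j then (1 : R) else 0)ᵀ = A.submatrix σ σ := by
  ext i j
  simp [mul_apply, ite_mul, mul_ite]

theorem Equiv.swap_lt_swap_iff_of_covBy {α : Type*} [LinearOrder α] [DecidableEq α] {a b : α}
    (hab : a ⋖ b) {i j : α} :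
    swap a b i < swap a b j ↔ i < j ∧ ¬(i = a ∧ j = b) ∨ i = b ∧ j = a := by
  have hab' : ∀ c, a < c → ¬c < b := hab.2
  rw [swap_apply_def, swap_apply_def]
  split_ifs <;> grind [hab.1]

theorem symS_apply_self {n : ℕ} (B : Matrix (Fin n) (Fin n) ℤ) (i : Fin n) : symS B i i = 2 := by
  simp [symS, upperV]

theorem symS_apply_of_ne {n : ℕ} {B : Matrix (Fin n) (Fin n) ℤ} (hB : Bᵀ = -B)
    {i j : Fin n} (hij : i ≠ j) :
    symS B i j = if i < j then B i j else -B i j := by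
  have hBji : B j i = -B i j := by simpa using congrFun (congrFun hB i) j
  rcases hij.lt_or_gt with h | h
  · simp [symS, upperV, h, h.not_gt, hij.symm]
  · simp [symS, upperV, h, h.not_gt, hij, hBji]

theorem stmt_13 {n : ℕ} (B : Matrix (Fin n) (Fin n) ℤ) (hB : Bᵀ = -B)
    (k k' : Fin n) (hk : (k' : ℕ) = (k : ℕ) + 1) :
    letI σ : Equiv.Perm (Fin n) := Equiv.swap k k'
    letI P : Matrix (Fin n) (Fin n) ℤ := Matrix.of fun i j => if σ i = j then 1 else 0
    P * symS B * Pᵀ - symS (P * B * Pᵀ) =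
      (2 * B k k') • (Matrix.single k k' (1 : ℤ) + Matrix.single k' k 1) := by
  have hcov : k ⋖ k' := by simp [hk]
  have hBk : B k' k = -B k k' := by simpa using congrFun (congrFun hB k) k'
  rw [of_perm_mul_mul_transpose, of_perm_mul_mul_transpose]
  set σ := Equiv.swap k k'
  have hBσ : (B.submatrix σ σ)ᵀ = -B.submatrix σ σ := by
    rw [transpose_submatrix, hB]; rfl
  ext i j
  rcases eq_or_ne i j with rfl | hij
  · simp [symS_apply_self, single_apply]; grind [hcov.ne]
  · have hσ : σ i ≠ σ j := σ.injective.ne hij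
    rw [Matrix.sub_apply, submatrix_apply, symS_apply_of_ne hB hσ, symS_apply_of_ne hBσ hij,
      submatrix_apply]
    by_cases h₁ : i = k ∧ j = k'
    · obtain ⟨rfl, rfl⟩ := h₁
      simp [σ, hcov.lt, hcov.lt.not_gt, hcov.ne, hcov.ne', hBk]; ring
    by_cases h₂ : i = k' ∧ j = k
    · obtain ⟨rfl, rfl⟩ := h₂
      simp [σ, hcov.lt, hcov.lt.not_gt, hcov.ne, hcov.ne']; ring
    have hlt : σ i < σ j ↔ i < j := by
      rw [Equiv.swap_lt_swap_iff_of_covBy hcov]; tauto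
    simp [hlt, eq_comm (a := k), eq_comm (a := k'), h₁, h₂]
end

section
/- Define δ(B) := det(𝔖(B)) mod 4 for a skew-symmetric n×n integer matrix B, where 𝔖(B) = V(B) + V(B)ᵀ. Then for any n×n permutation matrix P, δ(P·B·Pᵀ) = δ(B). -/
open Matrix

/-- The binary invariant `δ(B) = det 𝔖(B) mod 4`. -/
def deltaInv {n : ℕ} (B : Matrix (Fin n) (Fin n) ℤ) : ℤ := (symS B).det % 4

/-
Off the diagonal, `𝔖(B)ᵢⱼ = ±Bᵢⱼ` with the sign `+` exactly when `i < j`, and `𝔖(B)ᵢᵢ = 2`. Hence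
reindexing `B` by `σ` reindexes `𝔖(B)` up to flipping the signs of the entries at the pairs `{i, j}`
whose order `σ` reverses: a symmetric sign pattern with `1` on the diagonal. Such a flip leaves the
determinant unchanged modulo `4`. In the Leibniz expansion the terms of `τ` and `τ⁻¹` are equal
because both matrices are symmetric, and each term is either unchanged or negated, so a pair
`{τ, τ⁻¹}` changes by `0` or by `4` times a term; for an involution `τ` the flipped factors come in
pairs `(i, τ i)`, `(τ i, i)`, so its term does not change at all.
-/

open Equiv Finset

theorem two_smul_units_smul_sub_self_eq_zero {R : Type*} [CommRing R] (h4 : (4 : R) = 0) (u : ℤˣ)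
    (x : R) :
    (2 : ℤ) • (u • x - x) = 0 := by
  rcases Int.units_eq_one_or u with rfl | rfl
  · simp
  · calc (2 : ℤ) • ((-1 : ℤˣ) • x - x) = -((4 : R) * x) := by
          rw [Units.neg_smul, one_smul, zsmul_eq_mul]; push_cast; ring
    _ = 0 := by rw [h4, zero_mul, neg_zero]

namespace Matrix

variable {n : Type*} [Fintype n]

theorem IsSymm.prod_perm_inv {α : Type*} [CommMonoid α] {M : Matrix n n α} (hM : M.IsSymm)
    (τ : Perm n) : ∏ i, M (τ⁻¹ i) i = ∏ i, M (τ i) i := calc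
  ∏ i, M (τ⁻¹ i) i = ∏ i, M i (τ⁻¹ i) := by simp_rw [hM.apply]
  _ = ∏ i, M (τ i) i := by
    rw [← Equiv.prod_comp τ]; simp

theorem IsSymm.prod_perm_eq_one_of_involutive {ε : Matrix n n ℤˣ} (hε : ε.IsSymm)
    (hdiag : ∀ i, ε i i = 1) {τ : Perm n} (hτ : Function.Involutive τ) :
    ∏ i, ε (τ i) i = 1 :=
  prod_ninvolution τ (fun i => by rw [hτ i, hε.apply, Int.units_mul_self])
    (fun i hi hfix => hi (by rw [hfix, hdiag])) (fun _ => mem_univ _) hτ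

variable [DecidableEq n]

theorem of_perm_mul_mul_transpose_s14 {R : Type*} [Semiring R] (σ : Perm n) (M : Matrix n n R) :
    (of fun i j => if σ i = j then (1 : R) else 0) * M *
      (of fun i j => if σ i = j then 1 else 0)ᵀ = M.submatrix σ σ := by
  ext i j
  simp [mul_apply, ite_mul, mul_ite]

theorem det_of_units_smul_of_four_eq_zero {R : Type*} [CommRing R] (h4 : (4 : R) = 0)
    {S : Matrix n n R} (hS : S.IsSymm) {ε : Matrix n n ℤˣ} (hε : ε.IsSymm)
    (hdiag : ∀ i, ε i i = 1) :
    (of fun i j => ε i j • S i j).det = S.det := by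
  have hterm (τ : Perm n) :
      ∏ i, (of fun i j => ε i j • S i j) (τ i) i = (∏ i, ε (τ i) i) • ∏ i, S (τ i) i := by
    simp only [of_apply, prod_smul]
  rw [det_apply, det_apply, ← sub_eq_zero, ← sum_sub_distrib]
  refine sum_ninvolution (fun τ => τ⁻¹) (fun τ => ?_) (fun τ hτ hinv => hτ ?_)
    (fun _ => mem_univ _) inv_inv
  · rw [hterm, hterm, Perm.sign_inv, hε.prod_perm_inv, hS.prod_perm_inv, ← smul_sub, ← two_smul ℤ,
      smul_comm, two_smul_units_smul_sub_self_eq_zero h4, smul_zero]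
  · have hτ : Function.Involutive τ := fun i =>
      (Perm.inv_eq_iff_eq.mp (by rw [hinv])).symm
    rw [hterm, hε.prod_perm_eq_one_of_involutive hdiag hτ, one_smul, sub_self]

theorem det_of_units_smul_modEq_four {S : Matrix n n ℤ} (hS : S.IsSymm) {ε : Matrix n n ℤˣ}
    (hε : ε.IsSymm) (hdiag : ∀ i, ε i i = 1) :
    (of fun i j => ε i j • S i j).det ≡ S.det [ZMOD 4] := by
  refine (ZMod.intCast_eq_intCast_iff _ _ 4).mp ?_
  rw [Int.cast_det, Int.cast_det,
    ← det_of_units_smul_of_four_eq_zero (by decide) (hS.map _) hε hdiag]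
  congr 1
  ext i j
  simp [Units.smul_def]

end Matrix

section LinearOrder

variable {ι : Type*} [LinearOrder ι]

def orderSign (i j : ι) : ℤˣ := if i < j then 1 else -1

theorem orderSign_self (i : ι) : orderSign i i = -1 := by simp [orderSign]

theorem orderSign_swap {i j : ι} (h : i ≠ j) : orderSign j i = -orderSign i j := by
  rcases h.lt_or_gt with h | h <;> simp [orderSign, h, h.not_gt]

def inversionSign (σ : Perm ι) : Matrix ι ι ℤˣ :=
  of fun i j => orderSign i j * orderSign (σ i) (σ j)

theorem inversionSign_isSymm (σ : Perm ι) : (inversionSign σ).IsSymm := by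
  refine Matrix.ext fun i j => ?_
  by_cases h : i = j
  · rw [h, transpose_apply]
  · simp only [transpose_apply, inversionSign, of_apply, orderSign_swap h,
      orderSign_swap (σ.injective.ne h), neg_mul_neg]

theorem inversionSign_self (σ : Perm ι) (i : ι) : inversionSign σ i i = 1 := by
  simp [inversionSign, orderSign_self]

end LinearOrder

theorem symS_isSymm {n : ℕ} (B : Matrix (Fin n) (Fin n) ℤ) : (symS B).IsSymm :=
  isSymm_add_transpose_self (upperV B)

theorem symS_apply_of_transpose_eq_neg {n : ℕ} {B : Matrix (Fin n) (Fin n) ℤ} (hB : Bᵀ = -B)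
    (i j : Fin n) : symS B i j = if i = j then 2 else orderSign i j • B i j := by
  have hji : B j i = -B i j := congr_fun (congr_fun hB i) j
  rcases lt_trichotomy i j with h | rfl | h
  · simp [symS, upperV, orderSign, h, h.ne, h.ne', h.not_gt]
  · norm_num [symS, upperV]
  · simp [symS, upperV, orderSign, h, h.ne', h.not_gt, hji]

theorem symS_submatrix {n : ℕ} {B : Matrix (Fin n) (Fin n) ℤ} (hB : Bᵀ = -B)
    (σ : Perm (Fin n)) :
    symS (B.submatrix σ σ) = of fun i j => inversionSign σ i j • (symS B).submatrix σ σ i j := by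
  have hBσ : (B.submatrix σ σ)ᵀ = -B.submatrix σ σ := by
    rw [transpose_submatrix, hB]
    rfl
  ext i j
  simp only [symS_apply_of_transpose_eq_neg hBσ, of_apply, submatrix_apply,
    symS_apply_of_transpose_eq_neg hB]
  by_cases h : i = j
  · simp [h, inversionSign_self]
  · simp only [h, σ.injective.eq_iff, if_false, inversionSign, of_apply]
    rw [mul_smul, smul_smul (orderSign (σ i) (σ j)), Int.units_mul_self, one_smul]

theorem stmt_14 {n : ℕ} (B : Matrix (Fin n) (Fin n) ℤ) (hB : Bᵀ = -B)
    (σ : Equiv.Perm (Fin n)) :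
    letI P : Matrix (Fin n) (Fin n) ℤ := Matrix.of fun i j => if σ i = j then 1 else 0
    deltaInv (P * B * Pᵀ) = deltaInv B := by
  rw [of_perm_mul_mul_transpose_s14, deltaInv, deltaInv, symS_submatrix hB,
    ← det_submatrix_equiv_self σ (symS B)]
  exact det_of_units_smul_modEq_four ((symS_isSymm B).submatrix σ) (inversionSign_isSymm σ)
    (inversionSign_self σ)
end

section
/- Let n ≥ 3 be odd. Let A_n ∈ M_n(ℤ) be the skew-symmetric tridiagonal matrix with (A_n)_{i,i+1} = 1, (A_n)_{i+1,i} = -1 and all other entries 0. Then δ(A_n) = 0 if n ≡ 3 (mod 4) and δ(A_n) = 2 if n ≡ 1 (mod 4), where δ(B) = det(V(B)+V(B)ᵀ) mod 4. -/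
/-!
`V(A_n) + V(A_n)ᵀ` is the tridiagonal matrix with `2` on the diagonal and `1` beside it.
Cofactor expansion along the first row gives `D_{n+2} = 2 D_{n+1} - D_n` for its determinant,
so `D_n = n + 1`, which is `0` or `2` mod `4` according as `n ≡ 3` or `n ≡ 1` mod `4`.
-/

open Matrix

/-- The tridiagonal skew-symmetric matrix `A_n`. -/
def An (n : ℕ) : Matrix (Fin n) (Fin n) ℤ :=
  Matrix.of fun i j =>
    if (i : ℕ) + 1 = (j : ℕ) then 1 else if (j : ℕ) + 1 = (i : ℕ) then -1 else 0

namespace Matrix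

variable {R : Type*} [CommRing R]

def tridiagonal (a b c : R) (n : ℕ) : Matrix (Fin n) (Fin n) R :=
  of fun i j =>
    if (i : ℕ) = j then a else if (i : ℕ) + 1 = j then b else if (j : ℕ) + 1 = i then c else 0

theorem tridiagonal_apply (a b c : R) (n : ℕ) (i j : Fin n) :
    tridiagonal a b c n i j =
      if (i : ℕ) = j then a else if (i : ℕ) + 1 = j then b else if (j : ℕ) + 1 = i then c else 0 :=
  rfl

@[simp]
theorem tridiagonal_submatrix_succ_succ (a b c : R) (n : ℕ) :
    (tridiagonal a b c (n + 1)).submatrix Fin.succ Fin.succ = tridiagonal a b c n := by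
  ext i j
  simp only [submatrix_apply, tridiagonal_apply, Fin.val_succ, add_left_inj]

theorem det_tridiagonal_submatrix_succ_succAbove_one (a b c : R) (n : ℕ) :
    ((tridiagonal a b c (n + 2)).submatrix Fin.succ (Fin.succAbove 1)).det =
      c * (tridiagonal a b c n).det := by
  set M := (tridiagonal a b c (n + 2)).submatrix Fin.succ (Fin.succAbove 1)
  have h00 : M 0 0 = c := by simp [M, tridiagonal_apply]
  have hcol : ∀ i : Fin n, M i.succ 0 = 0 := fun i => by
    simp [M, tridiagonal_apply, Fin.val_succ]
  have hminor : M.submatrix Fin.succ Fin.succ = tridiagonal a b c n := by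
    ext i j
    simp [M, tridiagonal_apply, Fin.val_succ]
  rw [det_succ_column_zero, Fin.sum_univ_succ]
  simp [h00, hcol, hminor]

theorem det_tridiagonal_succ_succ (a b c : R) (n : ℕ) :
    (tridiagonal a b c (n + 2)).det =
      a * (tridiagonal a b c (n + 1)).det - b * c * (tridiagonal a b c n).det := by
  have h00 : tridiagonal a b c (n + 2) 0 0 = a := by simp [tridiagonal_apply]
  have h01 : tridiagonal a b c (n + 2) 0 1 = b := by simp [tridiagonal_apply]
  have hrow : ∀ j : Fin n, tridiagonal a b c (n + 2) 0 j.succ.succ = 0 := fun j => by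
    simp [tridiagonal_apply, Fin.val_succ]
  rw [det_succ_row_zero, Fin.sum_univ_succ, Fin.sum_univ_succ]
  simp only [Fin.succAbove_zero, Fin.succ_zero_eq_one, tridiagonal_submatrix_succ_succ,
    det_tridiagonal_submatrix_succ_succAbove_one, h00, h01, hrow, Fin.val_zero, Fin.val_one,
    pow_zero, pow_one, mul_zero, zero_mul, Finset.sum_const_zero, add_zero]
  ring

theorem det_tridiagonal_two_one_one : ∀ n : ℕ, (tridiagonal (2 : R) 1 1 n).det = n + 1
  | 0 => by simp
  | 1 => by norm_num [tridiagonal_apply]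
  | n + 2 => by
    rw [det_tridiagonal_succ_succ, det_tridiagonal_two_one_one (n + 1),
      det_tridiagonal_two_one_one n]
    push_cast
    ring

end Matrix

theorem symS_An_eq_tridiagonal (n : ℕ) : symS (An n) = tridiagonal 2 1 1 n := by
  ext i j
  simp only [symS, Matrix.add_apply, transpose_apply, upperV, An, of_apply, tridiagonal_apply,
    Fin.lt_def, Fin.ext_iff]
  split_ifs <;> omega

theorem stmt_16_general {n : ℕ} :
    (n % 4 = 3 → deltaInv (An n) = 0) ∧ (n % 4 = 1 → deltaInv (An n) = 2) := by
  rw [deltaInv, symS_An_eq_tridiagonal, det_tridiagonal_two_one_one]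
  omega

theorem stmt_16 {n : ℕ} (hn3 : 3 ≤ n) (hn : Odd n) :
    (n % 4 = 3 → deltaInv (An n) = 0) ∧ (n % 4 = 1 → deltaInv (An n) = 2) :=
  stmt_16_general
end

section
/- For every odd n ≥ 3 there exist skew-symmetric matrices B, B° ∈ M_n(ℤ) and a unimodular X ∈ M_n(ℤ) with B° = X·B·Xᵀ but δ(B) ≢ δ(B°) (mod 4), where δ(B) = det(V(B)+V(B)ᵀ) mod 4. That is, δ is not a congruence invariant over ℤ in odd size. -/
open Matrix

def pad2 {k : ℕ} (A : Matrix (Fin k) (Fin k) ℤ) (D : Matrix (Fin 2) (Fin 2) ℤ) :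
    Matrix (Fin (k + 2)) (Fin (k + 2)) ℤ :=
  (Matrix.reindex finSumFinEquiv finSumFinEquiv) (Matrix.fromBlocks A 0 0 D)

lemma pad2_apply {k : ℕ} (A : Matrix (Fin k) (Fin k) ℤ) (D : Matrix (Fin 2) (Fin 2) ℤ)
    (x y : Fin k ⊕ Fin 2) :
    pad2 A D (finSumFinEquiv x) (finSumFinEquiv y) = Matrix.fromBlocks A 0 0 D x y := by
  simp [pad2]

lemma pad2_11 {k : ℕ} (A : Matrix (Fin k) (Fin k) ℤ) (D : Matrix (Fin 2) (Fin 2) ℤ)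
    (a b : Fin k) : pad2 A D (Fin.castAdd 2 a) (Fin.castAdd 2 b) = A a b := by
  simpa using pad2_apply A D (Sum.inl a) (Sum.inl b)

lemma pad2_12 {k : ℕ} (A : Matrix (Fin k) (Fin k) ℤ) (D : Matrix (Fin 2) (Fin 2) ℤ)
    (a : Fin k) (b : Fin 2) : pad2 A D (Fin.castAdd 2 a) (Fin.natAdd k b) = 0 := by
  simpa using pad2_apply A D (Sum.inl a) (Sum.inr b)

lemma pad2_21 {k : ℕ} (A : Matrix (Fin k) (Fin k) ℤ) (D : Matrix (Fin 2) (Fin 2) ℤ)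
    (a : Fin 2) (b : Fin k) : pad2 A D (Fin.natAdd k a) (Fin.castAdd 2 b) = 0 := by
  simpa using pad2_apply A D (Sum.inr a) (Sum.inl b)

lemma pad2_22 {k : ℕ} (A : Matrix (Fin k) (Fin k) ℤ) (D : Matrix (Fin 2) (Fin 2) ℤ)
    (a b : Fin 2) : pad2 A D (Fin.natAdd k a) (Fin.natAdd k b) = D a b := by
  simpa using pad2_apply A D (Sum.inr a) (Sum.inr b)

lemma upperV_apply {n : ℕ} (B : Matrix (Fin n) (Fin n) ℤ) (i j : Fin n) :
    upperV B i j = if i < j then B i j else if i = j then 1 else 0 := rfl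

lemma pad2_upperV {k : ℕ} (A : Matrix (Fin k) (Fin k) ℤ) (D : Matrix (Fin 2) (Fin 2) ℤ) :
    upperV (pad2 A D) = pad2 (upperV A) (upperV D) := by
  ext i j
  obtain ⟨x, rfl⟩ := finSumFinEquiv.surjective i
  obtain ⟨y, rfl⟩ := finSumFinEquiv.surjective j
  rw [pad2_apply]
  cases x <;> cases y <;> rename_i a b <;>
    simp only [finSumFinEquiv_apply_left, finSumFinEquiv_apply_right,
      Matrix.fromBlocks_apply₁₁, Matrix.fromBlocks_apply₁₂, Matrix.fromBlocks_apply₂₁,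
      Matrix.fromBlocks_apply₂₂, upperV_apply, pad2_11, pad2_12, pad2_21, pad2_22,
      Fin.lt_def, Fin.ext_iff, Fin.coe_castAdd, Fin.coe_natAdd, Matrix.zero_apply] <;>
    have ha := a.isLt <;> have hb := b.isLt <;>
    split_ifs <;> first | rfl | omega

lemma pad2_transpose {k : ℕ} (A : Matrix (Fin k) (Fin k) ℤ) (D : Matrix (Fin 2) (Fin 2) ℤ) :
    (pad2 A D)ᵀ = pad2 Aᵀ Dᵀ := by
  simp [pad2, Matrix.fromBlocks_transpose, Matrix.transpose_submatrix, Matrix.reindex_apply]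

lemma pad2_neg {k : ℕ} (A : Matrix (Fin k) (Fin k) ℤ) (D : Matrix (Fin 2) (Fin 2) ℤ) :
    -(pad2 A D) = pad2 (-A) (-D) := by
  ext i j
  simp only [pad2, Matrix.reindex_apply, Matrix.neg_apply, Matrix.submatrix_apply]
  cases finSumFinEquiv.symm i <;> cases finSumFinEquiv.symm j <;> simp [Matrix.fromBlocks]

lemma pad2_add {k : ℕ} (A A' : Matrix (Fin k) (Fin k) ℤ) (D D' : Matrix (Fin 2) (Fin 2) ℤ) :
    pad2 A D + pad2 A' D' = pad2 (A + A') (D + D') := by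
  ext i j
  simp only [pad2, Matrix.reindex_apply, Matrix.add_apply, Matrix.submatrix_apply]
  cases finSumFinEquiv.symm i <;> cases finSumFinEquiv.symm j <;> simp [Matrix.fromBlocks]

lemma pad2_mul {k : ℕ} (A A' : Matrix (Fin k) (Fin k) ℤ) (D D' : Matrix (Fin 2) (Fin 2) ℤ) :
    pad2 A D * pad2 A' D' = pad2 (A * A') (D * D') := by
  simp only [pad2, Matrix.reindex_apply, Matrix.submatrix_mul_equiv,
    Matrix.fromBlocks_multiply]
  simp

lemma pad2_det {k : ℕ} (A : Matrix (Fin k) (Fin k) ℤ) (D : Matrix (Fin 2) (Fin 2) ℤ) :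
    (pad2 A D).det = A.det * D.det := by
  simp [pad2, Matrix.det_fromBlocks_zero₂₁]

lemma pad2_symS {k : ℕ} (A : Matrix (Fin k) (Fin k) ℤ) (D : Matrix (Fin 2) (Fin 2) ℤ) :
    symS (pad2 A D) = pad2 (symS A) (symS D) := by
  rw [symS, pad2_upperV, pad2_transpose, pad2_add]; rfl

def B3 : Matrix (Fin 3) (Fin 3) ℤ := !![0,1,0;-1,0,0;0,0,0]
def B3' : Matrix (Fin 3) (Fin 3) ℤ := !![0,1,1;-1,0,1;-1,-1,0]
def X3 : Matrix (Fin 3) (Fin 3) ℤ := !![1,0,0;0,1,0;-1,1,1]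
def J2 : Matrix (Fin 2) (Fin 2) ℤ := !![0,1;-1,0]

lemma step {k : ℕ} {B B' X : Matrix (Fin k) (Fin k) ℤ}
    (hB : Bᵀ = -B) (hB' : B'ᵀ = -B') (hX : X.det = 1) (hcong : B' = X * B * Xᵀ) :
    (pad2 B J2)ᵀ = -(pad2 B J2) ∧ (pad2 B' J2)ᵀ = -(pad2 B' J2) ∧
    (pad2 X 1).det = 1 ∧ pad2 B' J2 = pad2 X 1 * pad2 B J2 * (pad2 X 1)ᵀ ∧
    (symS (pad2 B J2)).det = 3 * (symS B).det ∧
    (symS (pad2 B' J2)).det = 3 * (symS B').det := by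
  refine ⟨?_, ?_, ?_, ?_, ?_, ?_⟩
  · rw [pad2_transpose, hB, show J2ᵀ = -J2 by decide, pad2_neg]
  · rw [pad2_transpose, hB', show J2ᵀ = -J2 by decide, pad2_neg]
  · rw [pad2_det, hX, Matrix.det_one, one_mul]
  · rw [pad2_transpose, pad2_mul, pad2_mul, ← hcong, Matrix.transpose_one, mul_one, one_mul]
  · rw [pad2_symS, pad2_det, show (symS J2).det = 3 by decide]; ring
  · rw [pad2_symS, pad2_det, show (symS J2).det = 3 by decide]; ring

lemma key (m : ℕ) :
    ∃ B B' X : Matrix (Fin (3 + 2 * m)) (Fin (3 + 2 * m)) ℤ,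
      Bᵀ = -B ∧ B'ᵀ = -B' ∧ X.det = 1 ∧ B' = X * B * Xᵀ ∧
      (symS B).det = 6 * 3 ^ m ∧ (symS B').det = 4 * 3 ^ m := by
  induction m with
  | zero =>
    refine ⟨B3, B3', X3, ?_, ?_, ?_, ?_, ?_, ?_⟩ <;> decide
  | succ m ih =>
    obtain ⟨B, B', X, hB, hB', hX, hcong, hd, hd'⟩ := ih
    obtain ⟨h1, h2, h3, h4, h5, h6⟩ := step hB hB' hX hcong
    exact ⟨pad2 B J2, pad2 B' J2, pad2 X 1, h1, h2, h3, h4,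
      h5.trans (by rw [hd]; ring), h6.trans (by rw [hd']; ring)⟩

theorem stmt_18 {n : ℕ} (hn3 : 3 ≤ n) (hn : Odd n) :
    ∃ (B B' X : Matrix (Fin n) (Fin n) ℤ),
      Bᵀ = -B ∧ B'ᵀ = -B' ∧ IsUnit X.det ∧ B' = X * B * Xᵀ ∧
      ¬ ((symS B).det ≡ (symS B').det [ZMOD 4]) := by
  obtain ⟨m, rfl⟩ : ∃ m, n = 3 + 2 * m := by
    obtain ⟨k, hk⟩ := hn
    exact ⟨k - 1, by omega⟩
  obtain ⟨B, B', X, hB, hB', hX, hcong, hd, hd'⟩ := key m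
  refine ⟨B, B', X, hB, hB', by rw [hX]; exact isUnit_one, hcong, ?_⟩
  rw [hd, hd']
  intro h
  obtain ⟨c, hc⟩ := h.dvd
  have hodd : Odd ((3 : ℤ) ^ m) := Odd.pow ⟨1, by ring⟩
  obtain ⟨t, ht⟩ := hodd
  omega
end
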